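/- arXiv:2208.08347 — 4 statements merged into one kernel-verified Lean document; each statement's English description precedes it below -/
import Mathlib

section
/- Let m be a positive integer and suppose (y₁, x₁, x₂) are integers with x₁ ≠ 0, x₂ ≠ 0, satisfying x₁·x₂ − 2·y₁·x₁ = 0 and y₁²·x₁ − y₁·x₁·x₂ − x₂ = −m·x₁. Then x₂ = 2·y₁, there exists a nonzero integer t with 2·y₁ = t·x₁, and m = (t·x₁/2)² + t (in particular 4·m = (t·x₁)² + 4t). -/
/-! On the variety, the first equation forces `x₂ = 2 y₁` (as `x₁ ≠ 0`); substituting this into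
the second one leaves `(m - y₁²) x₁ = 2 y₁`, so `t := m - y₁²` is the required integer, nonzero
because `y₁ ≠ 0`. -/

section PCF

variable {R : Type*} [CommRing R]

theorem eq_two_mul_of_mul_sub_eq_zero [NoZeroDivisors R] {y₁ x₁ x₂ : R} (hx₁ : x₁ ≠ 0)
    (h1 : x₁ * x₂ - 2 * y₁ * x₁ = 0) : x₂ = 2 * y₁ :=
  mul_left_cancel₀ hx₁ (by linear_combination h1)

theorem sub_sq_mul_eq_two_mul {m y₁ x₁ : R}
    (h2 : y₁ ^ 2 * x₁ - y₁ * x₁ * (2 * y₁) - 2 * y₁ = -m * x₁) :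
    (m - y₁ ^ 2) * x₁ = 2 * y₁ := by
  linear_combination h2

end PCF

theorem stmt_8_general (m : ℤ) (y₁ x₁ x₂ : ℤ) (hx₁ : x₁ ≠ 0) (hx₂ : x₂ ≠ 0)
    (h1 : x₁ * x₂ - 2 * y₁ * x₁ = 0)
    (h2 : y₁ ^ 2 * x₁ - y₁ * x₁ * x₂ - x₂ = -m * x₁) :
    x₂ = 2 * y₁ ∧
    ∃ t : ℤ, t ≠ 0 ∧ 2 * y₁ = t * x₁ ∧ m = (t * x₁ / 2) ^ 2 + t ∧
      4 * m = (t * x₁) ^ 2 + 4 * t := by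
  obtain rfl := eq_two_mul_of_mul_sub_eq_zero hx₁ h1
  have htx := sub_sq_mul_eq_two_mul h2
  have ht : m - y₁ ^ 2 ≠ 0 := by
    rintro h
    rw [h, zero_mul] at htx
    exact hx₂ htx.symm
  have hdiv : (m - y₁ ^ 2) * x₁ / 2 = y₁ := by
    rw [htx, Int.mul_ediv_cancel_left y₁ two_ne_zero]
  refine ⟨rfl, m - y₁ ^ 2, ht, htx.symm, by rw [hdiv]; ring, by rw [htx]; ring⟩

theorem stmt_8 (m : ℤ) (hm : 0 < m) (y₁ x₁ x₂ : ℤ) (hx₁ : x₁ ≠ 0) (hx₂ : x₂ ≠ 0)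
    (h1 : x₁ * x₂ - 2 * y₁ * x₁ = 0)
    (h2 : y₁ ^ 2 * x₁ - y₁ * x₁ * x₂ - x₂ = -m * x₁) :
    x₂ = 2 * y₁ ∧
    ∃ t : ℤ, t ≠ 0 ∧ 2 * y₁ = t * x₁ ∧ m = (t * x₁ / 2) ^ 2 + t ∧
      4 * m = (t * x₁) ^ 2 + 4 * t :=
  stmt_8_general m y₁ x₁ x₂ hx₁ hx₂ h1 h2
end

section
/- Let m be a positive integer and let (y₁, x₁, x₂, x₃) be integers with x₁, x₂, x₃ nonzero satisfying 2y₁x₂x₁ + 2y₁ − x₃x₂x₁ + x₂ − x₁ − x₃ = 0 and m(x₂x₁ + 1) = y₁(x₃x₂x₁ + x₁ + x₃ − x₂) − y₁²(x₂x₁ + 1) + x₃x₂ + 1. If moreover 2y₁ = x₃, then x₁ = x₂, x₁ is even, and writing x₁ = 2s and y₁ = s + (4s² + 1)t for integers s ≠ 0 and t, we have m = 16t²s⁴ + 8ts³ + (8t² + 1)s² + 6ts + t² + 1. -/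
/-!
With `x₃ = 2y₁` the first equation collapses to `x₂ = x₁`, and the second becomes
`(m - y₁²)(x₁² + 1) = 2x₁y₁ + 1`. So `x₁² + 1` divides the odd number `2x₁y₁ + 1`, which forces
`x₁ = 2s` to be even; since `x₁² + 1` is coprime to `x₁` it also divides
`x₁(2y₁ - x₁) = (2x₁y₁ + 1) - (x₁² + 1)`, hence `2(y₁ - s)`, hence `y₁ - s`. Writing
`y₁ = s + (4s² + 1)t` and cancelling `4s² + 1` gives `m - y₁² = 1 + 4st`.
-/

namespace Int

section SqAddOneDvd

variable {x y : ℤ}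

lemma even_of_sq_add_one_dvd_two_mul_mul_add_one (h : x ^ 2 + 1 ∣ 2 * x * y + 1) : Even x := by
  rw [← not_odd_iff_even]
  intro hx
  have heven : Even (2 * (x * y) + 1) := mul_assoc 2 x y ▸ h.even hx.pow.add_one
  exact not_even_two_mul_add_one _ heven

lemma sq_add_one_dvd_two_mul_sub_of_dvd (h : x ^ 2 + 1 ∣ 2 * x * y + 1) :
    x ^ 2 + 1 ∣ 2 * y - x := by
  have hcop : IsCoprime (x ^ 2 + 1) x := ⟨1, -x, by ring⟩
  refine hcop.dvd_of_dvd_mul_left ?_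
  have hsplit : x * (2 * y - x) = 2 * x * y + 1 - (x ^ 2 + 1) := by ring
  exact hsplit ▸ h.sub dvd_rfl

theorem exists_eq_of_sq_add_one_dvd_two_mul_mul_add_one (h : x ^ 2 + 1 ∣ 2 * x * y + 1) :
    ∃ s t : ℤ, x = 2 * s ∧ y = s + (4 * s ^ 2 + 1) * t := by
  obtain ⟨s, rfl⟩ := (even_of_sq_add_one_dvd_two_mul_mul_add_one h).two_dvd
  have hdvd : 4 * s ^ 2 + 1 ∣ 2 * (y - s) := by
    convert sq_add_one_dvd_two_mul_sub_of_dvd h using 1 <;> ring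
  have hcop : IsCoprime (4 * s ^ 2 + 1) 2 := ⟨1, -2 * s ^ 2, by ring⟩
  obtain ⟨t, ht⟩ := hcop.dvd_of_dvd_mul_left hdvd
  exact ⟨s, t, rfl, by linear_combination ht⟩

end SqAddOneDvd

end Int

theorem stmt_11_general (m : ℤ) (y₁ x₁ x₂ x₃ : ℤ)
    (hx₁ : x₁ ≠ 0)
    (h1 : 2 * y₁ * x₂ * x₁ + 2 * y₁ - x₃ * x₂ * x₁ + x₂ - x₁ - x₃ = 0)
    (h2 : m * (x₂ * x₁ + 1) =
      y₁ * (x₃ * x₂ * x₁ + x₁ + x₃ - x₂) - y₁ ^ 2 * (x₂ * x₁ + 1) + x₃ * x₂ + 1)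
    (h3 : 2 * y₁ = x₃) :
    x₁ = x₂ ∧ 2 ∣ x₁ ∧
    ∃ s t : ℤ, s ≠ 0 ∧ x₁ = 2 * s ∧ y₁ = s + (4 * s ^ 2 + 1) * t ∧
      m = 16 * t ^ 2 * s ^ 4 + 8 * t * s ^ 3 + (8 * t ^ 2 + 1) * s ^ 2 + 6 * t * s
            + t ^ 2 + 1 := by
  subst h3
  obtain rfl : x₁ = x₂ := by linear_combination -h1
  have key : (m - y₁ ^ 2) * (x₁ ^ 2 + 1) = 2 * x₁ * y₁ + 1 := by linear_combination h2
  obtain ⟨s, t, rfl, rfl⟩ :=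
    Int.exists_eq_of_sq_add_one_dvd_two_mul_mul_add_one (Dvd.intro_left _ key)
  have hs : s ≠ 0 := by rintro rfl; exact hx₁ rfl
  have hk : m - (s + (4 * s ^ 2 + 1) * t) ^ 2 = 1 + 4 * s * t :=
    mul_right_cancel₀ (by positivity : (4 * s ^ 2 + 1 : ℤ) ≠ 0) (by linear_combination key)
  exact ⟨rfl, dvd_mul_right 2 s, s, t, hs, rfl, rfl, by linear_combination hk⟩

theorem stmt_11 (m : ℤ) (hm : 0 < m) (y₁ x₁ x₂ x₃ : ℤ)
    (hx₁ : x₁ ≠ 0) (hx₂ : x₂ ≠ 0) (hx₃ : x₃ ≠ 0)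
    (h1 : 2 * y₁ * x₂ * x₁ + 2 * y₁ - x₃ * x₂ * x₁ + x₂ - x₁ - x₃ = 0)
    (h2 : m * (x₂ * x₁ + 1) =
      y₁ * (x₃ * x₂ * x₁ + x₁ + x₃ - x₂) - y₁ ^ 2 * (x₂ * x₁ + 1) + x₃ * x₂ + 1)
    (h3 : 2 * y₁ = x₃) :
    x₁ = x₂ ∧ 2 ∣ x₁ ∧
    ∃ s t : ℤ, s ≠ 0 ∧ x₁ = 2 * s ∧ y₁ = s + (4 * s ^ 2 + 1) * t ∧
      m = 16 * t ^ 2 * s ^ 4 + 8 * t * s ^ 3 + (8 * t ^ 2 + 1) * s ^ 2 + 6 * t * s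
            + t ^ 2 + 1 :=
  stmt_11_general m y₁ x₁ x₂ x₃ hx₁ h1 h2 h3
end

section
/- For integers t, the matrix product D(−2+t)·D(1)·D(−2)·D(−1+2t)·D(0)·D(−(−2+t))·D(0) equals [[−t, −t² − 1], [−1, −t]], where D(a) = [[a, 1], [1, 0]]. -/
def D (a : ℤ) : Matrix (Fin 2) (Fin 2) ℤ := !![a, 1; 1, 0]

theorem stmt_14 (t : ℤ) :
    D (-2 + t) * D 1 * D (-2) * D (-1 + 2 * t) * D 0 * D (-(-2 + t)) * D 0 =
      !![-t, -t ^ 2 - 1; -1, -t] := by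
  simp only [D, Matrix.mul_fin_two]
  ring_nf
end

section
/- For every integer n ≥ 1, the algebraic number η_n = 1 + Σ_{k=1}^{2^n − 1} 2·cos(kπ/2^{n+1}) satisfies η_n · τ_n(η_n) = −1, where τ_n is the nontrivial automorphism of ℚ(2cos(π/2^{n+1})) fixing ℚ(2cos(π/2^n)); equivalently, the relative norm N_{n/n−1}(η_n) = −1. -/
/-!
With `t = π / 2 ^ (n + 2)` the terms are `2 cos (2kt)`, and multiplying by `sin t` resp. `cos t`
telescopes the two sums (Dirichlet kernel):
`η sin t = sin ((2N + 1) t)` and `τ(η) cos t = (-1) ^ N cos ((2N + 1) t)` for `N = 2 ^ n - 1`.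
Since `(2N + 1) t = π / 2 - t` and `N` is odd, this gives `η sin t = cos t` and
`τ(η) cos t = -sin t`, so `η τ(η) = -1`.
-/

open Real Finset

theorem one_add_sum_two_mul_cos_mul_sin (t : ℝ) (N : ℕ) :
    (1 + ∑ k ∈ Icc 1 N, 2 * cos (2 * k * t)) * sin t = sin ((2 * N + 1) * t) := by
  induction N with
  | zero => simp
  | succ N ih =>
    have h₁ : t - 2 * ((N + 1 : ℕ) : ℝ) * t = -((2 * N + 1) * t) := by push_cast; ring
    have h₂ : t + 2 * ((N + 1 : ℕ) : ℝ) * t = (2 * (N + 1 : ℕ) + 1) * t := by ring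
    rw [sum_Icc_succ_top (by omega), ← add_assoc, add_mul, ih, mul_assoc, mul_comm (cos _),
      ← mul_assoc, two_mul_sin_mul_cos, h₁, h₂, sin_neg]
    ring

theorem one_add_sum_neg_one_pow_mul_two_mul_cos_mul_cos (t : ℝ) (N : ℕ) :
    (1 + ∑ k ∈ Icc 1 N, (-1) ^ k * (2 * cos (2 * k * t))) * cos t =
      (-1) ^ N * cos ((2 * N + 1) * t) := by
  induction N with
  | zero => simp
  | succ N ih =>
    have h₁ : 2 * ((N + 1 : ℕ) : ℝ) * t - t = (2 * N + 1) * t := by push_cast; ring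
    have h₂ : 2 * ((N + 1 : ℕ) : ℝ) * t + t = (2 * (N + 1 : ℕ) + 1) * t := by ring
    rw [sum_Icc_succ_top (by omega), ← add_assoc, add_mul, ih, mul_assoc,
      two_mul_cos_mul_cos, h₁, h₂, pow_succ]
    ring

/-- `τ_n` negates exactly the odd-index cosine terms, so the second factor is `τ_n(η_n)`. -/
theorem stmt_19 (n : ℕ) (hn : 1 ≤ n) :
    (1 + ∑ k ∈ Finset.Icc (1 : ℕ) (2 ^ n - 1),
        2 * Real.cos ((k : ℝ) * Real.pi / 2 ^ (n + 1))) *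
    (1 + ∑ k ∈ Finset.Icc (1 : ℕ) (2 ^ n - 1),
        (-1 : ℝ) ^ k * (2 * Real.cos ((k : ℝ) * Real.pi / 2 ^ (n + 1)))) = -1 := by
  set t := π / 2 ^ (n + 2)
  have hangle (k : ℕ) : (k : ℝ) * π / 2 ^ (n + 1) = 2 * k * t := by
    simp only [t, pow_succ]; field_simp
  have hend : (2 * ((2 ^ n - 1 : ℕ) : ℝ) + 1) * t = π / 2 - t := by
    simp only [t, pow_succ]; push_cast [Nat.one_le_two_pow]; field_simp; ring
  have hodd : Odd (2 ^ n - 1) :=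
    Nat.Even.sub_odd Nat.one_le_two_pow (Nat.even_pow.mpr ⟨even_two, by omega⟩) odd_one
  have ht₀ : 0 < t := by positivity
  have ht₁ : t < π / 2 :=
    div_lt_div_of_pos_left pi_pos two_pos (lt_self_pow₀ one_lt_two (by omega))
  have hη := one_add_sum_two_mul_cos_mul_sin t (2 ^ n - 1)
  have hη' := one_add_sum_neg_one_pow_mul_two_mul_cos_mul_cos t (2 ^ n - 1)
  rw [hend, sin_pi_div_two_sub] at hη
  rw [hend, cos_pi_div_two_sub, hodd.neg_one_pow] at hη'
  have hsc : sin t * cos t ≠ 0 :=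
    (mul_pos (sin_pos_of_pos_of_lt_pi ht₀ (by linarith))
      (cos_pos_of_mem_Ioo ⟨by linarith, ht₁⟩)).ne'
  simp only [hangle]
  apply mul_right_cancel₀ hsc
  rw [mul_mul_mul_comm, hη, hη']
  ring
end
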